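/- arXiv:1009.2085 — 2 statements merged into one kernel-verified Lean document; each statement's English description precedes it below -/
import Mathlib

section
/- Let (M, π) be a Poisson manifold, V_π a Poisson spray with flow φ_t, ∇ a torsion-free classical connection on TM, ξ ∈ T*M with φ_t(ξ) defined for t ∈ [0,1], a(t) = φ_t(ξ), γ = p ∘ a. For v₀ ∈ T_ξ(T*M), let v_t = (dφ_t)(v₀) with components (v̄_t, θ_{v_t}) with respect to ∇. Then the path v̄ in TM and the path θ_v in T*M along γ satisfy ∇̄_a(v̄) = π♯(θ_v), where ∇̄ is the contravariant connection on TM induced by ∇. -/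
/-!
Formalization framework for "On the existence of symplectic realizations"
(Crainic–Mărcuț).  We work on a chart: the Poisson manifold is an open set
`U ⊆ ℝⁿ` (with `Vec n := Fin n → ℝ`), its cotangent bundle is
`T*U = U × ℝⁿ ⊆ Pt n := Vec n × Vec n`, with bundle projection `Prod.fst`.
A bivector field is given by its components `Pb x p q = π_{pq}(x)`, a classical
connection on `TM` by its Christoffel symbols `Γ x p q r = Γ_{pq}^r(x)`.
-/

noncomputable section
open Set

namespace PoissonPaper

abbrev Vec (n : ℕ) := Fin n → ℝ
abbrev Pt (n : ℕ) := Vec n × Vec n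

variable {n : ℕ}

/-- Partial derivative `∂_l f (x)`. -/
def pd (l : Fin n) (f : Vec n → ℝ) (x : Vec n) : ℝ :=
  fderiv ℝ f x (Pi.single l 1)

/-- The bundle map `π♯ : T*M → TM`, `β(π♯ α) = π(α, β)`;
in components `(π♯ ξ)_q = ∑_p π_{pq} ξ_p`. -/
def sharp (Pb : Vec n → Fin n → Fin n → ℝ) (x ξ : Vec n) : Vec n :=
  fun q => ∑ p, Pb x p q * ξ p

/-- The Jacobiator of the bivector `Pb` on the coordinate functions:
`{{x_j,x_k},x_i} + {{x_k,x_i},x_j} + {{x_i,x_j},x_k}`; `π` is Poisson iff it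
vanishes. -/
def jacobiator (Pb : Vec n → Fin n → Fin n → ℝ) (x : Vec n) (i j k : Fin n) : ℝ :=
  ∑ l, (Pb x l i * pd l (fun y => Pb y j k) x
      + Pb x l j * pd l (fun y => Pb y k i) x
      + Pb x l k * pd l (fun y => Pb y i j) x)

/-- Components of the Schouten bracket `[π, π]` (with the convention
`[π,π](df,dg,dh) = 2({f,{g,h}} + {g,{h,f}} + {h,{f,g}})`). -/
def schouten (Pb : Vec n → Fin n → Fin n → ℝ) (x : Vec n) (i j k : Fin n) : ℝ :=
  -(2 * jacobiator Pb x i j k)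

/-- `Pb` is a smooth bivector field (an antisymmetric 2-tensor) on `U`. -/
def IsBivectorOn (U : Set (Vec n)) (Pb : Vec n → Fin n → Fin n → ℝ) : Prop :=
  (∀ p q, ContDiffOn ℝ (⊤ : ℕ∞) (fun x => Pb x p q) U) ∧
  (∀ x ∈ U, ∀ p q, Pb x q p = - Pb x p q)

/-- `Pb` is a Poisson bivector on `U` : a bivector with `[π,π] = 0`
(the Jacobi identity). -/
def IsPoissonOn (U : Set (Vec n)) (Pb : Vec n → Fin n → Fin n → ℝ) : Prop :=
  IsBivectorOn U Pb ∧ ∀ x ∈ U, ∀ i j k, jacobiator Pb x i j k = 0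

/-- A Poisson spray for `(U, π)`: a (smooth) vector field `V` on `T*U = U × ℝⁿ`
such that `(dp)_ξ(V_ξ) = π♯(ξ)` and `m_t^*(V) = t V` for all `t > 0`
(the latter written as `(dm_t)(t • V_ξ) = V(m_t ξ)`, where `m_t(x,y) = (x,t•y)`
and `dm_t(v,θ) = (v, t•θ)`). -/
structure IsSpray (U : Set (Vec n)) (Pb : Vec n → Fin n → Fin n → ℝ)
    (V : Pt n → Pt n) : Prop where
  smooth : ContDiffOn ℝ (⊤ : ℕ∞) V (U ×ˢ (univ : Set (Vec n)))
  base : ∀ ξ : Pt n, ξ.1 ∈ U → (V ξ).1 = sharp Pb ξ.1 ξ.2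
  homog : ∀ t : ℝ, 0 < t → ∀ ξ : Pt n, ξ.1 ∈ U →
    V (ξ.1, t • ξ.2) = (t • (V ξ).1, t • t • (V ξ).2)

/-- A local flow `φ` of the vector field `V` on `T*U = U × ℝⁿ ⊆ Pt n`, with
open domain `D ⊆ ℝ × Pt n`. -/
structure IsLocalFlow (U : Set (Vec n)) (V : Pt n → Pt n)
    (D : Set (ℝ × Pt n)) (φ : ℝ → Pt n → Pt n) : Prop where
  isOpen_dom : IsOpen D
  mem_zero : ∀ ξ : Pt n, ξ.1 ∈ U → ((0 : ℝ), ξ) ∈ D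
  init : ∀ ξ : Pt n, φ 0 ξ = ξ
  interval : ∀ (t : ℝ) (ξ : Pt n), (t, ξ) ∈ D → ∀ s ∈ uIcc (0:ℝ) t, (s, ξ) ∈ D
  invariant : ∀ (t : ℝ) (ξ : Pt n), (t, ξ) ∈ D → (φ t ξ).1 ∈ U
  hasDeriv : ∀ (t : ℝ) (ξ : Pt n), (t, ξ) ∈ D →
    HasDerivAt (fun s => φ s ξ) (V (φ t ξ)) t
  group : ∀ (s t : ℝ) (ξ : Pt n), (t, ξ) ∈ D → (s, φ t ξ) ∈ D →
    (s + t, ξ) ∈ D ∧ φ s (φ t ξ) = φ (s + t) ξ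

/-- The canonical symplectic form `ω_can = ∑ dx_i ∧ dy_i` of `T*ℝⁿ = ℝⁿ × ℝⁿ`
(constant coefficients): `ω_can(v, w) = ⟨θ_w, v̄⟩ - ⟨θ_v, w̄⟩`. -/
def omegaCan (v w : Pt n) : ℝ := ∑ i, (w.2 i * v.1 i - v.2 i * w.1 i)

/-- The 2-form `ω := ∫₀¹ (φ_t)^* ω_can dt`. -/
def omegaInt (φ : ℝ → Pt n → Pt n) (ξ v w : Pt n) : ℝ :=
  ∫ t in (0:ℝ)..1, omegaCan (fderiv ℝ (φ t) ξ v) (fderiv ℝ (φ t) ξ w)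

/-- Nondegeneracy of a 2-form at a point. -/
def Nondeg (ω : Pt n → Pt n → Pt n → ℝ) (ξ : Pt n) : Prop :=
  ∀ v : Pt n, (∀ w : Pt n, ω ξ v w = 0) → v = 0

/-- Closedness of a 2-form on `S` (`dω = 0`, expressed on constant vector
fields). -/
def ClosedOn (S : Set (Pt n)) (ω : Pt n → Pt n → Pt n → ℝ) : Prop :=
  ∀ ξ ∈ S, ∀ u v w : Pt n,
    fderiv ℝ (fun η => ω η v w) ξ u - fderiv ℝ (fun η => ω η u w) ξ v
      + fderiv ℝ (fun η => ω η u v) ξ w = 0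

/-- `ω` is a symplectic form on `S`: a smooth, bilinear, antisymmetric,
closed, nondegenerate 2-form. -/
def IsSymplecticOn (S : Set (Pt n)) (ω : Pt n → Pt n → Pt n → ℝ) : Prop :=
  (∀ ξ ∈ S, ∀ v w : Pt n, ω ξ w v = - ω ξ v w) ∧
  (∀ ξ ∈ S, ∀ (a b : ℝ) (v v' w : Pt n),
      ω ξ (a • v + b • v') w = a * ω ξ v w + b * ω ξ v' w) ∧
  (∀ v w : Pt n, ContDiffOn ℝ (⊤ : ℕ∞) (fun ξ => ω ξ v w) S) ∧
  ClosedOn S ω ∧ (∀ ξ ∈ S, Nondeg ω ξ)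

/-- The projection `p = Prod.fst : (S, ω) → (U, π)` is a Poisson map: for each
`ξ ∈ S` and `θ ∈ T*_{p(ξ)}M`, any `v` with `i_v ω = p^*θ` at `ξ` satisfies
`(dp)_ξ(v) = π♯(θ)`; i.e. the bivector inverse to `ω` pushes forward to `π`. -/
def FstIsPoissonMap (S : Set (Pt n)) (Pb : Vec n → Fin n → Fin n → ℝ)
    (ω : Pt n → Pt n → Pt n → ℝ) : Prop :=
  ∀ ξ ∈ S, ∀ θ : Vec n, ∀ v : Pt n,
    (∀ w : Pt n, ω ξ v w = ∑ i, θ i * w.1 i) → v.1 = sharp Pb ξ.1 θ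

/-- Lie bracket of vector fields on `ℝⁿ` (in components). -/
def lieVF (X Y : Vec n → Vec n) (x : Vec n) : Vec n :=
  fun q => ∑ p, (X x p * pd p (fun y => Y y q) x - Y x p * pd p (fun y => X y q) x)

/-- Lie derivative of a 1-form `β` along a vector field `X` (in components):
`(L_X β)_r = ∑_p (X_p ∂_p β_r + β_p ∂_r X_p)`. -/
def lieDer1 (X β : Vec n → Vec n) (x : Vec n) : Vec n :=
  fun r => ∑ p, (X x p * pd p (fun y => β y r) x + β x p * pd r (fun y => X y p) x)

/-- The pairing `π(α, β)`. -/
def pbPair (Pb : Vec n → Fin n → Fin n → ℝ) (α β : Vec n → Vec n) (x : Vec n) : ℝ :=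
  ∑ p, ∑ q, Pb x p q * α x p * β x q

/-- The Koszul bracket `[α, β]_π = L_{π♯α} β − L_{π♯β} α − d(π(α,β))` on
1-forms. -/
def koszul (Pb : Vec n → Fin n → Fin n → ℝ) (α β : Vec n → Vec n) (x : Vec n) :
    Vec n :=
  fun r => lieDer1 (fun y => sharp Pb y (α y)) β x r
         - lieDer1 (fun y => sharp Pb y (β y)) α x r
         - pd r (pbPair Pb α β) x

/-- The Lie derivative `L_{π♯α}(f)` of a function along `π♯α`. -/
def LDer (Pb : Vec n → Fin n → Fin n → ℝ) (α : Vec n → Vec n) (f : Vec n → ℝ)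
    (x : Vec n) : ℝ :=
  ∑ q, sharp Pb x (α x) q * pd q f x

/-- Classical covariant derivative of a 1-form `α` along a vector field `X`,
for the connection dual to the one on `TM` with Christoffel symbols `Γ`:
`(∇_X α)_q = ∑_p X_p ∂_p α_q − ∑_{p,r} Γ_{pq}^r X_p α_r`. -/
def covD1 (Γ : Vec n → Fin n → Fin n → Fin n → ℝ) (X α : Vec n → Vec n)
    (x : Vec n) : Vec n :=
  fun q => (∑ p, X x p * pd p (fun y => α y q) x)
         - ∑ p, ∑ r, Γ x p q r * X x p * α x r

/-- The contravariant connection `∇̄` on `TM` induced by a classical connection: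
`∇̄_α(V) = π♯(∇_V α) + [π♯α, V]`. -/
def nbarVF (Pb : Vec n → Fin n → Fin n → ℝ)
    (Γ : Vec n → Fin n → Fin n → Fin n → ℝ)
    (α X : Vec n → Vec n) (x : Vec n) : Vec n :=
  fun s => (∑ q, Pb x q s * covD1 Γ X α x q)
         + lieVF (fun y => sharp Pb y (α y)) X x s

/-- The contravariant connection `∇̄` on `T*M` induced by a classical
connection: `∇̄_α(β) = ∇_{π♯β}(α) + [α, β]_π`. -/
def nbar1F (Pb : Vec n → Fin n → Fin n → ℝ)
    (Γ : Vec n → Fin n → Fin n → Fin n → ℝ)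
    (α β : Vec n → Vec n) (x : Vec n) : Vec n :=
  fun r => covD1 Γ (fun y => sharp Pb y (β y)) α x r + koszul Pb α β x r

/-- Connection coefficients of `∇̄` on `TM`: `(∇̄_{dx_p} ∂_q)^r`. -/
def GbarTM (Pb : Vec n → Fin n → Fin n → ℝ)
    (Γ : Vec n → Fin n → Fin n → Fin n → ℝ) (x : Vec n) (p q r : Fin n) : ℝ :=
  -(∑ s, Pb x s r * Γ x q s p) - pd q (fun y => Pb y p r) x

/-- Connection coefficients of `∇̄` on `T*M`: `(∇̄_{dx_p} dx_q)_r`. -/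
def GbarT1 (Pb : Vec n → Fin n → Fin n → ℝ)
    (Γ : Vec n → Fin n → Fin n → Fin n → ℝ) (x : Vec n) (p q r : Fin n) : ℝ :=
  pd r (fun y => Pb y p q) x - ∑ s, Pb x q s * Γ x s r p

/-- Connection coefficients of the contravariant connection `∇_α := ∇_{π♯α}`
on `T*M`: `(∇_{π♯ dx_p} dx_q)_r`. -/
def Gplain (Pb : Vec n → Fin n → Fin n → ℝ)
    (Γ : Vec n → Fin n → Fin n → Fin n → ℝ) (x : Vec n) (p q r : Fin n) : ℝ :=
  -(∑ s, Pb x p s * Γ x s r q)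

/-- Derivative of a path `u` (of tangent or cotangent vectors) along a
cotangent path with covector components `a` over base path `γ`, for a
contravariant connection with coefficients `G` (so `(∇_a u)_r = u̇_r +
∑_{p,q} a_p u_q G_{pq}^r`). -/
def covAlong (G : Vec n → Fin n → Fin n → Fin n → ℝ) (a γ : ℝ → Vec n)
    (u : ℝ → Vec n) (t : ℝ) : Vec n :=
  fun r => deriv (fun s => u s r) t + ∑ p, ∑ q, a t p * u t q * G (γ t) p q r

/-- Vertical component `θ_v = v − hor_ξ(v̄)` of a tangent vector
`v ∈ T_ξ(T*M)` with respect to the classical connection `Γ`. -/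
def vert (Γ : Vec n → Fin n → Fin n → Fin n → ℝ) (ξ v : Pt n) : Vec n :=
  fun q => v.2 q - ∑ p, ∑ r, Γ ξ.1 p q r * v.1 p * ξ.2 r

/-- The horizontal subspace `H_ξ ⊆ T_ξ(T*M)` of the classical connection `Γ`. -/
def Hor (Γ : Vec n → Fin n → Fin n → Fin n → ℝ) (ξ : Pt n) : Set (Pt n) :=
  {u : Pt n | ∀ q, u.2 q = ∑ p, ∑ r, Γ ξ.1 p q r * u.1 p * ξ.2 r}

/-- A contravariant connection on `T*M` over the Poisson manifold `(U, π)`: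
a bilinear operation `(α, β) ↦ ∇_α β` on 1-forms, function-linear in `α` and
satisfying the Leibniz rule `∇_α(fβ) = f ∇_α β + L_{π♯α}(f) β`. -/
structure IsContraConn (U : Set (Vec n)) (Pb : Vec n → Fin n → Fin n → ℝ)
    (C : (Vec n → Vec n) → (Vec n → Vec n) → (Vec n → Vec n)) : Prop where
  addLeft : ∀ (α α' β : Vec n → Vec n), ∀ x ∈ U,
    C (α + α') β x = C α β x + C α' β x
  addRight : ∀ (α β β' : Vec n → Vec n), ∀ x ∈ U,
    C α (β + β') x = C α β x + C α β' x
  smulLeft : ∀ f : Vec n → ℝ, ContDiffOn ℝ (⊤ : ℕ∞) f U →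
    ∀ (α β : Vec n → Vec n), ∀ x ∈ U,
      C (fun y => f y • α y) β x = f x • C α β x
  leibniz : ∀ f : Vec n → ℝ, ContDiffOn ℝ (⊤ : ℕ∞) f U →
    ∀ (α β : Vec n → Vec n), ∀ x ∈ U,
      C α (fun y => f y • β y) x = f x • C α β x + LDer Pb α f x • β x

/-- Christoffel symbols of a contravariant connection:
`∇_{dx_p}(dx_q) = ∑_r Γ_{pq}^r dx_r`. -/
def christ (C : (Vec n → Vec n) → (Vec n → Vec n) → (Vec n → Vec n))
    (x : Vec n) (p q r : Fin n) : ℝ :=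
  C (fun _ => Pi.single p 1) (fun _ => Pi.single q 1) x r

/-- A smooth 1-form on `U` (in components). -/
def Smooth1F (U : Set (Vec n)) (α : Vec n → Vec n) : Prop :=
  ∀ q, ContDiffOn ℝ (⊤ : ℕ∞) (fun x => α x q) U

/-- The pairing `g(α, β)` of a fiber metric on `T*M` with 1-forms. -/
def gPair (g : Vec n → Fin n → Fin n → ℝ) (α β : Vec n → Vec n) (x : Vec n) : ℝ :=
  ∑ p, ∑ q, g x p q * α x p * β x q

end PoissonPaper

/-!
Differentiating `v_t = (dφ_t)(v₀)` in `t` gives the variational equation `v̇_t = (dV)_{a(t)}(v_t)`.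
Since `(dp)(V_η) = π♯(η)`, the base component of `(dV)_η(v)` is `(∂_{v̄} π)♯(η) + π♯(v_fibre)`.
In `∇̄_a(v̄)` the derivative of `π` cancels against the `∂π` part of the coefficients of `∇̄`,
and the Christoffel part turns the fibre component into the vertical part `θ_v`.

The analytic input is that a `C¹` flow is differentiable in its initial point, with derivative
the fundamental solution `R` of `R' = (dV)_{a(t)} ∘ R`, `R 0 = 1`. The fundamental solution is
the sum of the Picard series. Along a tube around the trajectory the field is uniformly Lipschitz
and uniformly differentiable, so by Grönwall nearby trajectories stay in the tube, and the
linearization error `φ_t η - φ_t ξ - R t (η - ξ)` is `o(‖η - ξ‖)`.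
-/

section LinearODE

open MeasureTheory
open scoped Interval

variable {E : Type*} [NormedAddCommGroup E] [NormedSpace ℝ E]
  {A : ℝ → E →L[ℝ] E}

def picardTerm (A : ℝ → E →L[ℝ] E) : ℕ → ℝ → E →L[ℝ] E
  | 0 => fun _ => 1
  | k + 1 => fun t => ∫ s in (0:ℝ)..t, (A s).comp (picardTerm A k s)

lemma continuous_picardTerm (hA : Continuous A) : ∀ k, Continuous (picardTerm A k)
  | 0 => continuous_const
  | k + 1 => intervalIntegral.continuous_primitive
      (fun _ _ => (hA.clm_comp (continuous_picardTerm hA k)).intervalIntegrable _ _) 0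

lemma norm_picardTerm_le {c L : ℝ} (hL : ∀ s ∈ Icc (-c) c, ‖A s‖ ≤ L)
    (k : ℕ) {t : ℝ} (ht : t ∈ Icc (-c) c) :
    ‖picardTerm A k t‖ ≤ (L * |t|) ^ k / k.factorial := by
  induction k generalizing t with
  | zero =>
    simp only [picardTerm, pow_zero, Nat.factorial_zero, Nat.cast_one, div_one]
    exact ContinuousLinearMap.norm_id_le
  | succ k ih =>
    have hL0 : 0 ≤ L := (norm_nonneg _).trans (hL t ht)
    calc ‖picardTerm A (k + 1) t‖
        ≤ ∫ s in Ι 0 t, L ^ (k + 1) * |s| ^ k / k.factorial := by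
          rw [picardTerm, intervalIntegral.norm_intervalIntegral_eq]
          refine norm_integral_le_of_norm_le (Continuous.integrableOn_uIoc (by fun_prop))
            (ae_restrict_mem measurableSet_uIoc |>.mono fun s hs => ?_)
          have hs' : s ∈ Icc (-c) c :=
            uIcc_subset_Icc ⟨by linarith [ht.1, ht.2], by linarith [ht.1, ht.2]⟩ ht
              (uIoc_subset_uIcc hs)
          calc ‖(A s).comp (picardTerm A k s)‖ ≤ ‖A s‖ * ‖picardTerm A k s‖ :=
                ContinuousLinearMap.opNorm_comp_le _ _
            _ ≤ L * ((L * |s|) ^ k / k.factorial) := by gcongr; exacts [hL s hs', ih hs']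
            _ = L ^ (k + 1) * |s| ^ k / k.factorial := by ring
      _ = (L * |t|) ^ (k + 1) / (k + 1).factorial := by
          have h := integral_pow_abs_sub_uIoc (a := 0) (b := t) (n := k)
          simp only [sub_zero] at h
          rw [integral_div, integral_const_mul, h, Nat.factorial_succ]
          push_cast
          field_simp
          ring

lemma exists_norm_picardTerm_le (hA : Continuous A) (c : ℝ) :
    ∃ M, ∀ k, ∀ t ∈ Icc (-c) c, ‖picardTerm A k t‖ ≤ M ^ k / k.factorial := by
  obtain ⟨L, hL⟩ := isCompact_Icc.exists_bound_of_continuousOn hA.continuousOn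
  refine ⟨max L 0 * c, fun k t ht => (norm_picardTerm_le (fun s hs => (hL s hs).trans
    (le_max_left L 0)) k ht).trans ?_⟩
  gcongr
  exact abs_le.2 ht

variable [CompleteSpace E]

def fundamentalSolution (A : ℝ → E →L[ℝ] E) (t : ℝ) : E →L[ℝ] E := ∑' k, picardTerm A k t

lemma summable_picardTerm (hA : Continuous A) (t : ℝ) : Summable (picardTerm A · t) := by
  obtain ⟨M, hM⟩ := exists_norm_picardTerm_le hA |t|
  exact .of_norm_bounded (Real.summable_pow_div_factorial M) fun k => hM k t (abs_le.1 le_rfl)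

lemma continuous_fundamentalSolution (hA : Continuous A) : Continuous (fundamentalSolution A) := by
  refine continuous_iff_continuousAt.2 fun t => ?_
  obtain ⟨M, hM⟩ := exists_norm_picardTerm_le hA (|t| + 1)
  refine (continuousOn_tsum (fun k => (continuous_picardTerm hA k).continuousOn)
    (Real.summable_pow_div_factorial M) (hM ·)).continuousAt (Icc_mem_nhds ?_ ?_)
  all_goals cases abs_cases t <;> linarith

lemma fundamentalSolution_eq_one_add_integral (hA : Continuous A) (t : ℝ) :
    fundamentalSolution A t = 1 + ∫ s in (0:ℝ)..t, (A s).comp (fundamentalSolution A s) := by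
  obtain ⟨M, hM⟩ := exists_norm_picardTerm_le hA |t|
  obtain ⟨L, hL⟩ :=
    isCompact_Icc.exists_bound_of_continuousOn (hA.continuousOn (s := Icc (-|t|) |t|))
  have hsub : Ι 0 t ⊆ Icc (-|t|) |t| := uIoc_subset_uIcc.trans
    (uIcc_subset_Icc ⟨by linarith [abs_nonneg t], abs_nonneg t⟩ (abs_le.1 le_rfl))
  have hsum : HasSum (fun k => picardTerm A (k + 1) t)
      (∫ s in (0:ℝ)..t, (A s).comp (fundamentalSolution A s)) := by
    refine intervalIntegral.hasSum_integral_of_dominated_convergence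
      (fun k _ => L * (M ^ k / k.factorial)) (fun k => ?_) (fun k => ?_) ?_ ?_ ?_
    · exact (hA.clm_comp (continuous_picardTerm hA k)).aestronglyMeasurable
    · refine .of_forall fun s hs => ?_
      have hL0 : 0 ≤ L := (norm_nonneg _).trans (hL s (hsub hs))
      exact (ContinuousLinearMap.opNorm_comp_le _ _).trans
        (mul_le_mul (hL s (hsub hs)) (hM k s (hsub hs)) (norm_nonneg _) hL0)
    · exact .of_forall fun _ _ => (Real.summable_pow_div_factorial M).mul_left L
    · exact intervalIntegrable_const
    · exact .of_forall fun s _ => (summable_picardTerm hA s).hasSum.mapL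
        (ContinuousLinearMap.compL ℝ E E E (A s))
  rw [fundamentalSolution, (summable_picardTerm hA t).tsum_eq_zero_add, hsum.tsum_eq]
  rfl

lemma hasDerivAt_fundamentalSolution (hA : Continuous A) (t : ℝ) :
    HasDerivAt (fundamentalSolution A) ((A t).comp (fundamentalSolution A t)) t := by
  have hftc := (hA.clm_comp (continuous_fundamentalSolution hA)).integral_hasStrictDerivAt 0 t
  exact (hftc.hasDerivAt.const_add 1).congr_of_eventuallyEq
    (.of_forall (fundamentalSolution_eq_one_add_integral hA))

lemma fundamentalSolution_zero (hA : Continuous A) : fundamentalSolution A 0 = 1 := by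
  simp [fundamentalSolution_eq_one_add_integral hA 0]

end LinearODE

section FlowDerivative

open Metric Filter Topology
open scoped NNReal

variable {E : Type*} [NormedAddCommGroup E] [NormedSpace ℝ E] {W : E → E} {Ω K : Set E}

lemma IsCompact.exists_forall_norm_fderiv_sub_lt (hK : IsCompact K) (hΩ : IsOpen Ω)
    (hKΩ : K ⊆ Ω) (hW : ContDiffOn ℝ 1 W Ω) {ε : ℝ} (hε : 0 < ε) :
    ∃ δ > 0, ∀ x ∈ K, ball x δ ⊆ Ω ∧ ∀ y ∈ ball x δ, ‖fderiv ℝ W y - fderiv ℝ W x‖ < ε := by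
  obtain ⟨δ₁, hδ₁, hΩ₁⟩ := hK.exists_thickening_subset_open hΩ hKΩ
  have hcont : ∀ x ∈ K, ContinuousAt (fderiv ℝ W) x := fun x hx =>
    (hW.continuousOn_fderiv_of_isOpen hΩ le_rfl).continuousAt (hΩ.mem_nhds (hKΩ hx))
  obtain ⟨δ₂, hδ₂, h⟩ := mem_uniformity_dist.1
    (hK.uniformContinuousAt_of_continuousAt _ hcont (dist_mem_uniformity hε))
  refine ⟨min δ₁ δ₂, lt_min hδ₁ hδ₂, fun x hx => ⟨fun y hy => hΩ₁ ?_, fun y hy => ?_⟩⟩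
  · exact mem_thickening_iff.2 ⟨x, hx, (mem_ball.1 hy).trans_le (min_le_left _ _)⟩
  · rw [← dist_eq_norm, dist_comm]
    exact h ((mem_ball'.1 hy).trans_le (min_le_right _ _)) hx

lemma IsCompact.exists_forall_norm_sub_sub_fderiv_le (hK : IsCompact K) (hΩ : IsOpen Ω)
    (hKΩ : K ⊆ Ω) (hW : ContDiffOn ℝ 1 W Ω) {ε : ℝ} (hε : 0 < ε) :
    ∃ δ > 0, ∀ x ∈ K, ∀ y ∈ ball x δ,
      ‖W y - W x - fderiv ℝ W x (y - x)‖ ≤ ε * ‖y - x‖ := by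
  obtain ⟨δ, hδ, h⟩ := hK.exists_forall_norm_fderiv_sub_lt hΩ hKΩ hW hε
  refine ⟨δ, hδ, fun x hx y hy => ?_⟩
  exact (convex_ball x δ).norm_image_sub_le_of_norm_fderiv_le'
    (fun z hz => (hW.differentiableOn one_ne_zero).differentiableAt (hΩ.mem_nhds ((h x hx).1 hz)))
    (fun z hz => ((h x hx).2 z hz).le) (mem_ball_self hδ) hy

lemma IsCompact.exists_lipschitzOnWith_ball (hK : IsCompact K) (hΩ : IsOpen Ω)
    (hKΩ : K ⊆ Ω) (hW : ContDiffOn ℝ 1 W Ω) :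
    ∃ r > 0, ∃ L : ℝ≥0, ∀ x ∈ K, LipschitzOnWith L W (ball x r) ∧ ‖fderiv ℝ W x‖ ≤ L := by
  obtain ⟨r, hr, h⟩ := hK.exists_forall_norm_fderiv_sub_lt hΩ hKΩ hW one_pos
  obtain ⟨M, hM⟩ := hK.exists_bound_of_continuousOn
    ((hW.continuousOn_fderiv_of_isOpen hΩ le_rfl).mono hKΩ)
  refine ⟨r, hr, (M + 1).toNNReal, fun x hx => ?_⟩
  have hlip : LipschitzOnWith (M + 1).toNNReal W (ball x r) := by
    refine (convex_ball x r).lipschitzOnWith_of_nnnorm_fderiv_le (fun y hy =>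
      (hW.differentiableOn one_ne_zero).differentiableAt (hΩ.mem_nhds ((h x hx).1 hy)))
      fun y hy => ?_
    rw [← NNReal.coe_le_coe, coe_nnnorm]
    calc ‖fderiv ℝ W y‖ ≤ ‖fderiv ℝ W x‖ + ‖fderiv ℝ W y - fderiv ℝ W x‖ := norm_le_insert' _ _
      _ ≤ M + 1 := add_le_add (hM x hx) ((h x hx).2 y hy).le
      _ ≤ _ := Real.le_coe_toNNReal _
  exact ⟨hlip, norm_fderiv_le_of_lipschitzOn ℝ (ball_mem_nhds x hr) hlip⟩

lemma forall_mem_Icc_lt_of_forall_mem_Ico_lt {f : ℝ → ℝ} {a b r : ℝ}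
    (hf : ContinuousOn f (Icc a b)) (h : ∀ τ ∈ Icc a b, (∀ s ∈ Ico a τ, f s < r) → f τ < r) :
    ∀ s ∈ Icc a b, f s < r := by
  by_contra! hex
  have hB : IsClosed (Icc a b ∩ f ⁻¹' Ici r) :=
    hf.preimage_isClosed_of_isClosed isClosed_Icc isClosed_Ici
  have hbdd : BddBelow (Icc a b ∩ f ⁻¹' Ici r) := ⟨a, fun x hx => hx.1.1⟩
  obtain ⟨hτ, hfτ⟩ := hB.csInf_mem (let ⟨s, hs, hfs⟩ := hex; ⟨s, hs, hfs⟩) hbdd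
  refine (h _ hτ fun s hs => not_le.1 fun hrs => ?_).not_ge hfτ
  exact (csInf_le hbdd ⟨⟨hs.1, hs.2.le.trans hτ.2⟩, hrs⟩).not_gt hs.2

lemma IsIntegralCurveOn.hasDerivWithinAt_Ici {γ : ℝ → E} {v : ℝ → E → E} {a b t : ℝ}
    (h : IsIntegralCurveOn γ v (Icc a b)) (ht : t ∈ Ico a b) :
    HasDerivWithinAt γ (v t (γ t)) (Ici t) t :=
  (h t (Ico_subset_Icc_self ht)).mono_of_mem_nhdsWithin (Icc_mem_nhdsGE_of_mem ht)

lemma gronwallBound_zero_eq_mul (K ε x : ℝ) :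
    gronwallBound 0 K ε x = ε * gronwallBound 0 K 1 x := by
  unfold gronwallBound
  split_ifs <;> ring

theorem dist_le_of_isIntegralCurveOn_of_lipschitzOnWith_ball {f g : ℝ → E} {T r : ℝ} {L : ℝ≥0}
    (hf : IsIntegralCurveOn f (fun _ => W) (Icc 0 T))
    (hg : IsIntegralCurveOn g (fun _ => W) (Icc 0 T))
    (hW : ∀ s ∈ Icc 0 T, LipschitzOnWith L W (ball (g s) r))
    (h0 : dist (f 0) (g 0) * Real.exp (L * T) < r) :
    ∀ s ∈ Icc 0 T, dist (f s) (g s) ≤ dist (f 0) (g 0) * Real.exp (L * s) := by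
  have hr : 0 < r := lt_of_le_of_lt (by positivity) h0
  have gronwall : ∀ τ ∈ Icc 0 T, (∀ s ∈ Ico 0 τ, dist (f s) (g s) < r) →
      dist (f τ) (g τ) ≤ dist (f 0) (g 0) * Real.exp (L * τ) := by
    intro τ hτ hin
    have hsub : Icc 0 τ ⊆ Icc 0 T := Icc_subset_Icc_right hτ.2
    have hf' := hf.mono hsub
    have hg' := hg.mono hsub
    simpa using dist_le_of_trajectories_ODE_of_mem (v := fun _ => W)
      (s := fun s => ball (g s) r) (fun s hs => hW s (hsub (Ico_subset_Icc_self hs)))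
      hf'.continuousOn (fun s hs => hf'.hasDerivWithinAt_Ici hs) (fun s hs => hin s hs)
      hg'.continuousOn (fun s hs => hg'.hasDerivWithinAt_Ici hs) (fun s _ => mem_ball_self hr)
      le_rfl τ ⟨hτ.1, le_rfl⟩
  have hin : ∀ s ∈ Icc 0 T, dist (f s) (g s) < r :=
    forall_mem_Icc_lt_of_forall_mem_Ico_lt
      (continuous_dist.comp_continuousOn (hf.continuousOn.prodMk hg.continuousOn))
      fun τ hτ hin => (gronwall τ hτ hin).trans_lt (lt_of_le_of_lt (by gcongr; exact hτ.2) h0)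
  exact fun s hs => gronwall s hs fun σ hσ => hin σ ⟨hσ.1, hσ.2.le.trans hs.2⟩

theorem norm_sub_sub_le_gronwallBound {f g u : ℝ → E} {T ε : ℝ} {L : ℝ≥0}
    (hf : IsIntegralCurveOn f (fun _ => W) (Icc 0 T))
    (hg : IsIntegralCurveOn g (fun _ => W) (Icc 0 T))
    (hu : IsIntegralCurveOn u (fun s => fderiv ℝ W (g s)) (Icc 0 T))
    (hA : ∀ s ∈ Icc 0 T, ‖fderiv ℝ W (g s)‖ ≤ L)
    (hε : ∀ s ∈ Icc 0 T, ‖W (f s) - W (g s) - fderiv ℝ W (g s) (f s - g s)‖ ≤ ε) :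
    ∀ t ∈ Icc 0 T, ‖f t - g t - u t‖ ≤ gronwallBound ‖f 0 - g 0 - u 0‖ L ε t := by
  have bound : ∀ s ∈ Ico 0 T, ‖W (f s) - W (g s) - fderiv ℝ W (g s) (u s)‖
      ≤ L * ‖f s - g s - u s‖ + ε := by
    intro s hs
    have hs' := Ico_subset_Icc_self hs
    calc ‖W (f s) - W (g s) - fderiv ℝ W (g s) (u s)‖
        = ‖fderiv ℝ W (g s) (f s - g s - u s)
            + (W (f s) - W (g s) - fderiv ℝ W (g s) (f s - g s))‖ := by
          rw [map_sub (fderiv ℝ W (g s)) (f s - g s)]; abel_nf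
      _ ≤ L * ‖f s - g s - u s‖ + ε :=
          (norm_add_le _ _).trans (add_le_add (((fderiv ℝ W (g s)).le_opNorm _).trans
            (mul_le_mul_of_nonneg_right (hA s hs') (norm_nonneg _))) (hε s hs'))
  intro t ht
  simpa using norm_le_gronwallBound_of_norm_deriv_right_le (f := fun s => f s - g s - u s)
    ((hf.continuousOn.sub hg.continuousOn).sub hu.continuousOn)
    (fun s hs => ((hf.hasDerivWithinAt_Ici hs).sub (hg.hasDerivWithinAt_Ici hs)).sub
      (hu.hasDerivWithinAt_Ici hs)) le_rfl bound t ht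

theorem norm_sub_sub_le_of_lipschitzOnWith_ball {f g u : ℝ → E} {T r ε : ℝ} {L : ℝ≥0}
    (hf : IsIntegralCurveOn f (fun _ => W) (Icc 0 T))
    (hg : IsIntegralCurveOn g (fun _ => W) (Icc 0 T))
    (hu : IsIntegralCurveOn u (fun s => fderiv ℝ W (g s)) (Icc 0 T)) (hu0 : u 0 = f 0 - g 0)
    (hL : ∀ s ∈ Icc 0 T, LipschitzOnWith L W (ball (g s) r) ∧ ‖fderiv ℝ W (g s)‖ ≤ L)
    (hTaylor : ∀ s ∈ Icc 0 T, ∀ y ∈ ball (g s) r,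
      ‖W y - W (g s) - fderiv ℝ W (g s) (y - g s)‖ ≤ ε * ‖y - g s‖)
    (hε : 0 ≤ ε) (h0 : dist (f 0) (g 0) * Real.exp (L * T) < r) :
    ∀ t ∈ Icc 0 T, ‖f t - g t - u t‖
      ≤ ε * gronwallBound 0 L 1 t * Real.exp (L * T) * ‖f 0 - g 0‖ := by
  have hclose := dist_le_of_isIntegralCurveOn_of_lipschitzOnWith_ball hf hg
    (fun s hs => (hL s hs).1) h0
  have hclose' : ∀ s ∈ Icc 0 T, dist (f s) (g s) ≤ dist (f 0) (g 0) * Real.exp (L * T) :=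
    fun s hs => (hclose s hs).trans (by gcongr; exact hs.2)
  intro t ht
  have := norm_sub_sub_le_gronwallBound hf hg hu (fun s hs => (hL s hs).2)
    (ε := ε * (dist (f 0) (g 0) * Real.exp (L * T)))
    (fun s hs => (hTaylor s hs _ (mem_ball.2 ((hclose' s hs).trans_lt h0))).trans
      (by rw [← dist_eq_norm]; gcongr; exact hclose' s hs)) t ht
  rw [hu0, sub_self, norm_zero, gronwallBound_zero_eq_mul, dist_eq_norm] at this
  exact this.trans_eq (by ring)

theorem hasFDerivAt_flow {ψ : ℝ → E → E} {p : E} {T t : ℝ} {R : ℝ → E →L[ℝ] E}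
    (hΩ : IsOpen Ω) (hW : ContDiffOn ℝ 1 W Ω)
    (hψ : ∀ᶠ η in 𝓝 p, ψ 0 η = η ∧ IsIntegralCurveOn (ψ · η) (fun _ => W) (Icc 0 T))
    (hmem : ∀ s ∈ Icc 0 T, ψ s p ∈ Ω) (hR0 : R 0 = 1)
    (hR : ∀ s ∈ Icc 0 T, HasDerivWithinAt R ((fderiv ℝ W (ψ s p)).comp (R s)) (Icc 0 T) s)
    (ht : t ∈ Icc 0 T) :
    HasFDerivAt (ψ t) (R t) p := by
  obtain ⟨hp0, hp⟩ := hψ.self_of_nhds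
  have hK : IsCompact ((ψ · p) '' Icc 0 T) := isCompact_Icc.image_of_continuousOn hp.continuousOn
  have hKΩ : (ψ · p) '' Icc 0 T ⊆ Ω := image_subset_iff.2 hmem
  obtain ⟨r, hr, L, hL⟩ := hK.exists_lipschitzOnWith_ball hΩ hKΩ hW
  have hRh : ∀ h, IsIntegralCurveOn (R · h) (fun s => fderiv ℝ W (ψ s p)) (Icc 0 T) :=
    fun h s hs => by simpa using (hR s hs).clm_apply (hasDerivWithinAt_const _ _ h)
  set C := gronwallBound 0 L 1 t * Real.exp (L * T)
  have hC : 0 ≤ C := mul_nonneg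
    (by simpa [gronwallBound_x0] using gronwallBound_mono le_rfl zero_le_one L.2 ht.1)
    (Real.exp_pos _).le
  rw [hasFDerivAt_iff_isLittleO, Asymptotics.isLittleO_iff]
  intro c hc
  obtain ⟨δ, hδ, hTaylor⟩ :=
    hK.exists_forall_norm_sub_sub_fderiv_le hΩ hKΩ hW (ε := c / (C + 1)) (by positivity)
  have hnear : ∀ᶠ η in 𝓝 p, dist η p * Real.exp (L * T) < min r δ :=
    ((continuous_id.dist continuous_const).mul continuous_const).continuousAt.eventually_lt
      continuousAt_const (by simpa using lt_min hr hδ)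
  filter_upwards [hψ, hnear] with η ⟨hη0, hη⟩ hηp
  have hdefect := norm_sub_sub_le_of_lipschitzOnWith_ball hη hp (hRh (η - p))
    (by rw [hη0, hp0, hR0]; rfl)
    (fun s hs => ⟨(hL _ (mem_image_of_mem _ hs)).1.mono (ball_subset_ball (min_le_left _ _)),
      (hL _ (mem_image_of_mem _ hs)).2⟩)
    (fun s hs y hy => hTaylor _ (mem_image_of_mem _ hs) y (ball_subset_ball (min_le_right _ _) hy))
    (by positivity) (by rwa [hη0, hp0]) t ht
  rw [hη0, hp0] at hdefect
  calc ‖ψ t η - ψ t p - R t (η - p)‖ ≤ c * (C / (C + 1)) * ‖η - p‖ :=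
        hdefect.trans_eq (by ring)
    _ ≤ c * ‖η - p‖ := by
        gcongr
        exact mul_le_of_le_one_right hc.le ((div_le_one (by positivity)).2 (by linarith))

theorem hasFDerivAt_flow_of_hasDerivAt {ψ : ℝ → E → E} {p : E} {t : ℝ} {R : ℝ → E →L[ℝ] E}
    (hΩ : IsOpen Ω) (hW : ContDiffOn ℝ 1 W Ω)
    (hψ : ∀ᶠ η in 𝓝 p, ψ 0 η = η ∧ ∀ s ∈ uIcc 0 t, HasDerivAt (ψ · η) (W (ψ s η)) s)
    (hmem : ∀ s ∈ uIcc 0 t, ψ s p ∈ Ω) (hR0 : R 0 = 1)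
    (hR : ∀ s ∈ uIcc 0 t, HasDerivAt R ((fderiv ℝ W (ψ s p)).comp (R s)) s) :
    HasFDerivAt (ψ t) (R t) p := by
  rcases le_total 0 t with ht | ht
  · rw [uIcc_of_le ht] at hψ hmem hR
    exact hasFDerivAt_flow hΩ hW
      (hψ.mono fun η hη => ⟨hη.1, fun s hs => (hη.2 s hs).hasDerivWithinAt⟩)
      hmem hR0 (fun s hs => (hR s hs).hasDerivWithinAt) ⟨ht, le_rfl⟩
  · -- run the flow backwards: `s ↦ ψ (-s)` is a flow of `-W`
    rw [uIcc_of_ge ht] at hψ hmem hR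
    have hneg : ∀ s ∈ Icc 0 (-t), -s ∈ Icc t 0 :=
      fun s hs => ⟨by linarith [hs.2], by linarith [hs.1]⟩
    simpa using hasFDerivAt_flow (ψ := fun s => ψ (-s)) (W := fun y => -W y)
      (R := fun s => R (-s)) hΩ hW.neg
      (hψ.mono fun η hη => ⟨by simpa using hη.1, fun s hs => by
        simpa [Function.comp_def] using
          ((hη.2 (-s) (hneg s hs)).scomp s (hasDerivAt_neg s)).hasDerivWithinAt⟩)
      (fun s hs => hmem _ (hneg s hs)) (by simpa using hR0)
      (fun s hs => by
        simpa [fderiv_neg, Function.comp_def] using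
          ((hR (-s) (hneg s hs)).scomp s (hasDerivAt_neg s)).hasDerivWithinAt)
      ⟨neg_nonneg.2 ht, le_rfl⟩

end FlowDerivative

namespace PoissonPaper

open Metric Filter Topology

section

variable {n : ℕ} {U : Set (Vec n)} {Pb : Vec n → Fin n → Fin n → ℝ} {V : Pt n → Pt n}
  {D : Set (ℝ × Pt n)} {φ : ℝ → Pt n → Pt n}

lemma IsLocalFlow.exists_Icc_ball_subset (hφ : IsLocalFlow U V D φ) {ξ : Pt n} {t : ℝ}
    (ht0 : 0 ≤ t) (ht : (t, ξ) ∈ D) :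
    ∃ ρ > 0, ∀ s ∈ Icc (-ρ) (t + ρ), ∀ η ∈ ball ξ ρ, (s, η) ∈ D := by
  obtain ⟨ε₀, hε₀, h₀⟩ := isOpen_iff.1 hφ.isOpen_dom _ (hφ.interval t ξ ht 0 left_mem_uIcc)
  obtain ⟨ε₁, hε₁, h₁⟩ := isOpen_iff.1 hφ.isOpen_dom _ ht
  obtain ⟨ρ, hρ, hρ₀, hρ₁⟩ : ∃ ρ > 0, ρ < ε₀ ∧ ρ < ε₁ :=
    ⟨min ε₀ ε₁ / 2, by positivity, by linarith [min_le_left ε₀ ε₁, lt_min hε₀ hε₁],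
      by linarith [min_le_right ε₀ ε₁, lt_min hε₀ hε₁]⟩
  refine ⟨ρ, hρ, fun s hs η hη => ?_⟩
  have hη' : dist η ξ < ρ := hη
  rcases le_total 0 s with h | h
  · refine hφ.interval (t + ρ) η (h₁ ?_) s (by rw [uIcc_of_le (by linarith)]; exact ⟨h, hs.2⟩)
    simp only [mem_ball, Prod.dist_eq, Real.dist_eq, add_sub_cancel_left]
    exact max_lt (by rw [abs_of_pos (by positivity)]; exact hρ₁) (hη'.trans hρ₁)
  · refine hφ.interval (-ρ) η (h₀ ?_) s (by rw [uIcc_of_ge (by linarith)]; exact ⟨hs.1, h⟩)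
    simp only [mem_ball, Prod.dist_eq, Real.dist_eq, sub_zero, abs_neg]
    exact max_lt (by rw [abs_of_pos (by positivity)]; exact hρ₀) (hη'.trans hρ₀)

theorem IsLocalFlow.hasDerivAt_fderiv_apply (hU : IsOpen U)
    (hV : ContDiffOn ℝ 1 V (U ×ˢ univ)) (hφ : IsLocalFlow U V D φ) {ξ : Pt n} {t : ℝ}
    (ht0 : 0 ≤ t) (ht : (t, ξ) ∈ D) (v : Pt n) :
    HasDerivAt (fun s => fderiv ℝ (φ s) ξ v) (fderiv ℝ V (φ t ξ) (fderiv ℝ (φ t) ξ v)) t := by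
  obtain ⟨ρ, hρ, hbox⟩ := hφ.exists_Icc_ball_subset ht0 ht
  have hJ : -ρ ≤ t + ρ := by linarith
  have hmem : ∀ s ∈ Icc (-ρ) (t + ρ), φ s ξ ∈ U ×ˢ univ :=
    fun s hs => ⟨hφ.invariant s ξ (hbox s hs ξ (mem_ball_self hρ)), mem_univ _⟩
  -- `projIcc` extends the coefficients of the variational equation continuously to `ℝ`
  set A : ℝ → Pt n →L[ℝ] Pt n := fun s => fderiv ℝ V (φ (projIcc (-ρ) (t + ρ) hJ s) ξ)
  have hγ : Continuous fun s => φ (projIcc (-ρ) (t + ρ) hJ s) ξ :=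
    ContinuousOn.comp_continuous (g := (φ · ξ)) (fun s hs =>
      (hφ.hasDeriv s ξ (hbox s hs ξ (mem_ball_self hρ))).continuousAt.continuousWithinAt)
      (continuous_subtype_val.comp continuous_projIcc) fun s => (projIcc _ _ hJ s).2
  have hA : Continuous A :=
    (hV.continuousOn_fderiv_of_isOpen (hU.prod isOpen_univ) le_rfl).comp_continuous hγ
      fun s => hmem _ (projIcc _ _ hJ s).2
  have hAeq : ∀ s ∈ Icc (-ρ) (t + ρ), A s = fderiv ℝ V (φ s ξ) := fun s hs => by
    simp [A, projIcc_of_mem hJ hs]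
  have hfd : ∀ s ∈ Icc (-ρ) (t + ρ), HasFDerivAt (φ s) (fundamentalSolution A s) ξ := by
    intro s hs
    have hsub : uIcc 0 s ⊆ Icc (-ρ) (t + ρ) := uIcc_subset_Icc ⟨by linarith, by linarith⟩ hs
    refine hasFDerivAt_flow_of_hasDerivAt (hU.prod isOpen_univ) hV ?_
      (fun σ hσ => hmem σ (hsub hσ)) (fundamentalSolution_zero hA) fun σ hσ => ?_
    · filter_upwards [ball_mem_nhds ξ hρ] with η hη
      exact ⟨hφ.init η, fun σ hσ => hφ.hasDeriv σ η (hbox σ (hsub hσ) η hη)⟩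
    · rw [← hAeq σ (hsub hσ)]
      exact hasDerivAt_fundamentalSolution hA σ
  have htJ : t ∈ Icc (-ρ) (t + ρ) := ⟨by linarith, by linarith⟩
  have hev : (fun s => fderiv ℝ (φ s) ξ v) =ᶠ[𝓝 t] fun s => fundamentalSolution A s v :=
    eventually_of_mem (Icc_mem_nhds (a := -ρ) (b := t + ρ) (by linarith) (by linarith))
      fun s hs => by simp only [(hfd s hs).fderiv]
  rw [(hfd t htJ).fderiv, ← hAeq t htJ]
  simpa using ((hasDerivAt_fundamentalSolution hA t).clm_apply
    (hasDerivAt_const t v)).congr_of_eventuallyEq hev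

lemma fderiv_apply_eq_sum_pd (f : Vec n → ℝ) (x u : Vec n) :
    fderiv ℝ f x u = ∑ l, u l * pd l f x := by
  conv_lhs => rw [← Finset.univ_sum_single u]
  simp only [map_sum, pd]
  refine Finset.sum_congr rfl fun l _ => ?_
  rw [← smul_eq_mul, ← map_smul, ← Pi.single_smul, smul_eq_mul, mul_one]

lemma IsSpray.fderiv_apply_fst (hU : IsOpen U)
    (hPb : ∀ p q, DifferentiableOn ℝ (fun x => Pb x p q) U) (hV : IsSpray U Pb V)
    {w : Pt n} (hw : w.1 ∈ U) (u : Pt n) (r : Fin n) :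
    (fderiv ℝ V w u).1 r
      = ∑ p, ∑ q, w.2 p * u.1 q * pd q (fun y => Pb y p r) w.1 + sharp Pb w.1 u.2 r := by
  have hΩ : U ×ˢ univ ∈ 𝓝 w := (hU.prod isOpen_univ).mem_nhds ⟨hw, mem_univ _⟩
  have hPbw : ∀ p, HasFDerivAt (fun y => Pb y p r) (fderiv ℝ (fun y => Pb y p r) w.1) w.1 :=
    fun p => ((hPb p r).differentiableAt (hU.mem_nhds hw)).hasFDerivAt
  have hbase : HasFDerivAt (fun η : Pt n => ∑ p, Pb η.1 p r * η.2 p)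
      (∑ p, (Pb w.1 p r • ((ContinuousLinearMap.proj p).comp (ContinuousLinearMap.snd ℝ _ _))
        + w.2 p • (fderiv ℝ (fun y => Pb y p r) w.1).comp (ContinuousLinearMap.fst ℝ _ _))) w :=
    HasFDerivAt.fun_sum fun p _ => ((hPbw p).comp w hasFDerivAt_fst).mul
      ((ContinuousLinearMap.proj p).comp (ContinuousLinearMap.snd ℝ (Vec n) (Vec n))).hasFDerivAt
  have hfst : HasFDerivAt (fun η : Pt n => ∑ p, Pb η.1 p r * η.2 p)
      (((ContinuousLinearMap.proj r).comp (ContinuousLinearMap.fst ℝ (Vec n) (Vec n))).comp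
        (fderiv ℝ V w)) w := by
    refine (((ContinuousLinearMap.proj r).comp (ContinuousLinearMap.fst ℝ _ _)).hasFDerivAt.comp
      w ((hV.smooth.differentiableOn (by simp)).differentiableAt hΩ).hasFDerivAt)
      |>.congr_of_eventuallyEq ?_
    filter_upwards [hΩ] with η hη
    simp [hV.base η hη.1, sharp]
  have := congrArg (· u) (hfst.unique hbase)
  simp only [ContinuousLinearMap.comp_apply, ContinuousLinearMap.coe_fst',
    ContinuousLinearMap.proj_apply, ContinuousLinearMap.coe_snd', sum_apply, add_apply,
    smul_apply, smul_eq_mul] at this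
  rw [this, sharp, ← Finset.sum_add_distrib]
  refine Finset.sum_congr rfl fun p _ => ?_
  simp only [fderiv_apply_eq_sum_pd, Finset.mul_sum, mul_assoc]
  ring

lemma add_sum_mul_GbarTM_eq_sharp_vert (Γ : Vec n → Fin n → Fin n → Fin n → ℝ) (w v : Pt n)
    (r : Fin n) :
    (∑ p, ∑ q, w.2 p * v.1 q * pd q (fun y => Pb y p r) w.1 + sharp Pb w.1 v.2 r)
      + ∑ p, ∑ q, w.2 p * v.1 q * GbarTM Pb Γ w.1 p q r = sharp Pb w.1 (vert Γ w v) r := by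
  have hΓ : ∑ p, ∑ q, w.2 p * v.1 q * ∑ s, Pb w.1 s r * Γ w.1 q s p
      = ∑ q, Pb w.1 q r * ∑ p, ∑ s, Γ w.1 p q s * v.1 p * w.2 s := by
    calc ∑ p, ∑ q, w.2 p * v.1 q * ∑ s, Pb w.1 s r * Γ w.1 q s p
        = ∑ p, ∑ s, ∑ q, w.2 p * v.1 q * (Pb w.1 s r * Γ w.1 q s p) := by
          simp only [Finset.mul_sum]
          exact Finset.sum_congr rfl fun _ _ => Finset.sum_comm
      _ = ∑ s, ∑ p, ∑ q, w.2 p * v.1 q * (Pb w.1 s r * Γ w.1 q s p) := Finset.sum_comm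
      _ = ∑ s, Pb w.1 s r * ∑ q, ∑ p, Γ w.1 q s p * v.1 q * w.2 p := by
          simp only [Finset.mul_sum]
          exact Finset.sum_congr rfl fun _ _ => Finset.sum_comm.trans
            (Finset.sum_congr rfl fun _ _ => Finset.sum_congr rfl fun _ _ => by ring)
  simp only [GbarTM, sharp, vert, mul_sub, mul_neg, Finset.sum_sub_distrib,
    Finset.sum_neg_distrib, hΓ]
  ring

end

theorem nbar_of_pushed_vector_eq_sharp_vertical_general
    {n : ℕ} (U : Set (Vec n)) (hU : IsOpen U)
    (Pb : Vec n → Fin n → Fin n → ℝ) (hPb : IsPoissonOn U Pb)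
    (V : Pt n → Pt n) (hV : IsSpray U Pb V)
    (D : Set (ℝ × Pt n)) (φ : ℝ → Pt n → Pt n) (hφ : IsLocalFlow U V D φ)
    (Γ : Vec n → Fin n → Fin n → Fin n → ℝ)
    (ξ : Pt n) (hξ : ∀ t ∈ Icc (0:ℝ) 1, (t, ξ) ∈ D)
    (v0 : Pt n) (t : ℝ) (ht : t ∈ Icc (0:ℝ) 1) :
    covAlong (GbarTM Pb Γ) (fun s => (φ s ξ).2) (fun s => (φ s ξ).1)
        (fun s => (fderiv ℝ (φ s) ξ v0).1) t
      = sharp Pb ((φ t ξ).1) (vert Γ (φ t ξ) (fderiv ℝ (φ t) ξ v0)) := by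
  have hvar := hφ.hasDerivAt_fderiv_apply hU (hV.smooth.of_le (by exact_mod_cast le_top)) ht.1
    (hξ t ht) v0
  funext r
  have hr : HasDerivAt (fun s => (fderiv ℝ (φ s) ξ v0).1 r)
      ((fderiv ℝ V (φ t ξ) (fderiv ℝ (φ t) ξ v0)).1 r) t :=
    hasDerivAt_pi.1 (hasFDerivAt_fst.comp_hasDerivAt t hvar) r
  rw [covAlong, hr.deriv,
    hV.fderiv_apply_fst hU (fun p q => (hPb.1.1 p q).differentiableOn (by simp))
      (hφ.invariant t ξ (hξ t ht))]
  exact add_sum_mul_GbarTM_eq_sharp_vert Γ (φ t ξ) _ r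

/-- **Lemma.** Let `a(t) = φ_t(ξ)` with base `γ`, and for `v₀ ∈ T_ξ(T*M)` let
`v_t = (dφ_t)(v₀)` with components `(v̄_t, θ_{v_t})` with respect to the
torsion-free classical connection `Γ`.  Then `∇̄_a(v̄) = π♯(θ_v)`. -/
theorem nbar_of_pushed_vector_eq_sharp_vertical
    {n : ℕ} (U : Set (Vec n)) (hU : IsOpen U)
    (Pb : Vec n → Fin n → Fin n → ℝ) (hPb : IsPoissonOn U Pb)
    (V : Pt n → Pt n) (hV : IsSpray U Pb V)
    (D : Set (ℝ × Pt n)) (φ : ℝ → Pt n → Pt n) (hφ : IsLocalFlow U V D φ)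
    (Γ : Vec n → Fin n → Fin n → Fin n → ℝ)
    (hΓsym : ∀ x p q r, Γ x q p r = Γ x p q r)  -- torsion-free
    (hΓ : ∀ p q r, ContDiffOn ℝ (⊤ : ℕ∞) (fun x => Γ x p q r) U)
    (ξ : Pt n) (hξ : ∀ t ∈ Icc (0:ℝ) 1, (t, ξ) ∈ D)
    (v0 : Pt n) (t : ℝ) (ht : t ∈ Icc (0:ℝ) 1) :
    covAlong (GbarTM Pb Γ) (fun s => (φ s ξ).2) (fun s => (φ s ξ).1)
        (fun s => (fderiv ℝ (φ s) ξ v0).1) t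
      = sharp Pb ((φ t ξ).1) (vert Γ (φ t ξ) (fderiv ℝ (φ t) ξ v0)) :=
  nbar_of_pushed_vector_eq_sharp_vertical_general U hU Pb hPb V hV D φ hφ Γ ξ hξ v0 t ht

end PoissonPaper
end
end

section
/- Let M be a manifold, π an arbitrary bivector field on M (not necessarily Poisson), and ∇ a classical connection on TM, with induced contravariant-type operators ∇̄_α(V) = π♯(∇_V(α)) + [π♯(α), V] on TM and ∇̄_α(β) = ∇_{π♯β}(α) + [α, β]_π on T*M. Then for all 1-forms α, β, ∇̄_α(π♯(β)) − π♯(∇̄_α(β)) = (1/2) i_{α∧β}([π, π]) viewed as the vector field ½[π,π](α, β, ·); in particular, the two induced operators intertwine via π♯ for all α, β if and only if the correction term i_{α∧β}([π, π]) vanishes, which holds when π is Poisson. -/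
/-!
Formalization framework for "On the existence of symplectic realizations"
(Crainic–Mărcuț).  We work on a chart: the Poisson manifold is an open set
`U ⊆ ℝⁿ` (with `Vec n := Fin n → ℝ`), its cotangent bundle is
`T*U = U × ℝⁿ ⊆ Pt n := Vec n × Vec n`, with bundle projection `Prod.fst`.
A bivector field is given by its components `Pb x p q = π_{pq}(x)`, a classical
connection on `TM` by its Christoffel symbols `Γ x p q r = Γ_{pq}^r(x)`.
-/

noncomputable section
open Set

namespace PoissonPaper

variable {n : ℕ}

/-!
The `Γ`-terms of `∇̄_α(π♯β)` and `π♯(∇̄_α β)` coincide, so the defect is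
`[π♯α, π♯β] − π♯[α, β]_π`. In coordinates, `[α, β]_π` has first-order part
`∂_{π♯α} β − ∂_{π♯β} α` (the other derivatives of `α` and `β` cancel by antisymmetry of
`π`), and `π♯` of it matches the first-order part of `[π♯α, π♯β]`; what is left involves
only `π` and `∂π` and is the Jacobiator of `π` contracted with `α ∧ β`.
-/

section PartialDerivative

variable {l : Fin n} {f g : Vec n → ℝ} {x : Vec n}

lemma pd_congr (h : f =ᶠ[nhds x] g) : pd l f x = pd l g x := by
  unfold pd; rw [h.fderiv_eq]

lemma pd_neg : pd l (fun y => -f y) x = -pd l f x := by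
  unfold pd; rw [fderiv_fun_neg]; rfl

lemma pd_mul (hf : DifferentiableAt ℝ f x) (hg : DifferentiableAt ℝ g x) :
    pd l (fun y => f y * g y) x = f x * pd l g x + pd l f x * g x := by
  unfold pd; rw [fderiv_fun_mul hf hg]; simp [mul_comm]

lemma pd_sum {ι : Type*} (s : Finset ι) {F : ι → Vec n → ℝ}
    (hF : ∀ i ∈ s, DifferentiableAt ℝ (F i) x) :
    pd l (fun y => ∑ i ∈ s, F i y) x = ∑ i ∈ s, pd l (F i) x := by
  unfold pd; rw [fderiv_fun_sum hF]; simp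

end PartialDerivative

lemma nbarVF_sharp_sub_sharp_nbar1F (Pb : Vec n → Fin n → Fin n → ℝ)
    (Γ : Vec n → Fin n → Fin n → Fin n → ℝ) (α β : Vec n → Vec n) (x : Vec n) :
    nbarVF Pb Γ α (fun y => sharp Pb y (β y)) x - sharp Pb x (nbar1F Pb Γ α β x)
      = lieVF (fun y => sharp Pb y (α y)) (fun y => sharp Pb y (β y)) x
        - sharp Pb x (koszul Pb α β x) := by
  funext s
  simp only [Pi.sub_apply, nbarVF, nbar1F, sharp, mul_add, Finset.sum_add_distrib]
  ring

lemma sum_sharp_mul_sharp_comm (P : Fin n → Fin n → ℝ) (a : Vec n) (D : Fin n → Fin n → ℝ)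
    (s : Fin n) :
    ∑ p, (∑ i, P i p * a i) * ∑ j, P j s * D p j
      = ∑ r, P r s * ∑ p, (∑ i, P i p * a i) * D p r := by
  simp only [Finset.mul_sum]
  rw [Finset.sum_comm]
  exact Finset.sum_congr rfl fun r _ => Finset.sum_congr rfl fun p _ => by ring

section Bivector

variable {Pb : Vec n → Fin n → Fin n → ℝ} {x : Vec n}

lemma pd_swap_of_eventually_antisymm
    (hanti : ∀ᶠ y in nhds x, ∀ p q, Pb y q p = -Pb y p q) (l p q : Fin n) :
    pd l (fun y => Pb y q p) x = -pd l (fun y => Pb y p q) x := by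
  rw [pd_congr (hanti.mono fun y hy => hy p q), pd_neg]

lemma pd_sharp (hPb : ∀ p q, DifferentiableAt ℝ (fun y => Pb y p q) x)
    {ξ : Vec n → Vec n} (hξ : ∀ p, DifferentiableAt ℝ (fun y => ξ y p) x) (l q : Fin n) :
    pd l (fun y => sharp Pb y (ξ y) q) x
      = sharp Pb x (fun p => pd l (fun y => ξ y p) x) q
        + ∑ p, pd l (fun y => Pb y p q) x * ξ x p := by
  simp only [sharp]
  rw [pd_sum _ fun p _ => (hPb p q).fun_mul (hξ p), ← Finset.sum_add_distrib]
  exact Finset.sum_congr rfl fun p _ => pd_mul (hPb p q) (hξ p)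

lemma pd_pbPair (hPb : ∀ p q, DifferentiableAt ℝ (fun y => Pb y p q) x)
    {α β : Vec n → Vec n} (hα : ∀ p, DifferentiableAt ℝ (fun y => α y p) x)
    (hβ : ∀ p, DifferentiableAt ℝ (fun y => β y p) x) (r : Fin n) :
    pd r (pbPair Pb α β) x
      = ∑ i, ∑ j, (Pb x i j * α x i * pd r (fun y => β y j) x
          + Pb x i j * pd r (fun y => α y i) x * β x j
          + pd r (fun y => Pb y i j) x * α x i * β x j) := by
  have hPα : ∀ i j, DifferentiableAt ℝ (fun y => Pb y i j * α y i) x :=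
    fun i j => (hPb i j).fun_mul (hα i)
  unfold pbPair
  rw [pd_sum _ fun i _ => DifferentiableAt.fun_sum fun j _ => (hPα i j).fun_mul (hβ j)]
  refine Finset.sum_congr rfl fun i _ => ?_
  rw [pd_sum _ fun j _ => (hPα i j).fun_mul (hβ j)]
  refine Finset.sum_congr rfl fun j _ => ?_
  rw [pd_mul (hPα i j) (hβ j), pd_mul (hPb i j) (hα i)]
  ring

lemma koszul_apply (hPb : ∀ p q, DifferentiableAt ℝ (fun y => Pb y p q) x)
    (hanti : ∀ p q, Pb x q p = -Pb x p q)
    {α β : Vec n → Vec n} (hα : ∀ p, DifferentiableAt ℝ (fun y => α y p) x)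
    (hβ : ∀ p, DifferentiableAt ℝ (fun y => β y p) x) (r : Fin n) :
    koszul Pb α β x r
      = ∑ p, sharp Pb x (α x) p * pd p (fun y => β y r) x
        - ∑ p, sharp Pb x (β x) p * pd p (fun y => α y r) x
        - ∑ i, ∑ j, α x i * β x j * pd r (fun y => Pb y j i) x := by
  have hα_sharp : ∑ p, β x p * sharp Pb x (fun i => pd r (fun y => α y i) x) p
      = ∑ i, ∑ j, Pb x i j * pd r (fun y => α y i) x * β x j := by
    simp only [sharp, Finset.mul_sum]
    rw [Finset.sum_comm]
    exact Finset.sum_congr rfl fun i _ => Finset.sum_congr rfl fun j _ => by ring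
  have hβ_sharp : ∑ p, α x p * sharp Pb x (fun j => pd r (fun y => β y j) x) p
      = -∑ i, ∑ j, Pb x i j * α x i * pd r (fun y => β y j) x := by
    simp only [sharp, Finset.mul_sum, ← Finset.sum_neg_distrib]
    exact Finset.sum_congr rfl fun i _ => Finset.sum_congr rfl fun j _ => by
      rw [hanti]; ring
  have hdα : ∑ p, β x p * ∑ i, pd r (fun y => Pb y i p) x * α x i
      = ∑ i, ∑ j, pd r (fun y => Pb y i j) x * α x i * β x j := by
    simp only [Finset.mul_sum]
    rw [Finset.sum_comm]
    exact Finset.sum_congr rfl fun i _ => Finset.sum_congr rfl fun j _ => by ring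
  have hdβ : ∑ p, α x p * ∑ j, pd r (fun y => Pb y j p) x * β x j
      = ∑ i, ∑ j, α x i * β x j * pd r (fun y => Pb y j i) x := by
    simp only [Finset.mul_sum]
    exact Finset.sum_congr rfl fun i _ => Finset.sum_congr rfl fun j _ => by ring
  simp only [koszul, lieDer1, pd_sharp hPb hα, pd_sharp hPb hβ, pd_pbPair hPb hα hβ, mul_add,
    Finset.sum_add_distrib]
  linear_combination hα_sharp - hβ_sharp + hdα - hdβ

lemma lieVF_sharp_sub_sharp_koszul (hPb : ∀ p q, DifferentiableAt ℝ (fun y => Pb y p q) x)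
    (hanti : ∀ᶠ y in nhds x, ∀ p q, Pb y q p = -Pb y p q)
    {α β : Vec n → Vec n} (hα : ∀ p, DifferentiableAt ℝ (fun y => α y p) x)
    (hβ : ∀ p, DifferentiableAt ℝ (fun y => β y p) x) (s : Fin n) :
    lieVF (fun y => sharp Pb y (α y)) (fun y => sharp Pb y (β y)) x s
        - sharp Pb x (koszul Pb α β x) s
      = ∑ i, ∑ j, α x i * β x j * ((1/2 : ℝ) * schouten Pb x i j s) := by
  have hP : ∀ p q, Pb x q p = -Pb x p q := hanti.self_of_nhds
  have hdP := pd_swap_of_eventually_antisymm hanti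
  have hdα : ∑ p, (∑ i, Pb x i p * α x i) * ∑ j, pd p (fun y => Pb y j s) x * β x j
      = ∑ i, ∑ j, ∑ l, α x i * β x j * -(Pb x l i * pd l (fun y => Pb y j s) x) := by
    simp only [Finset.mul_sum, Finset.sum_mul]
    rw [Finset.sum_comm_cycle]
    refine Finset.sum_congr rfl fun i _ => ?_
    rw [Finset.sum_comm]
    exact Finset.sum_congr rfl fun j _ => Finset.sum_congr rfl fun l _ => by rw [hP]; ring
  have hdβ : ∑ p, (∑ j, Pb x j p * β x j) * ∑ i, pd p (fun y => Pb y i s) x * α x i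
      = ∑ i, ∑ j, ∑ l, α x i * β x j * (Pb x l j * pd l (fun y => Pb y s i) x) := by
    simp only [Finset.mul_sum, Finset.sum_mul]
    rw [Finset.sum_comm_cycle, Finset.sum_comm_cycle]
    exact Finset.sum_congr rfl fun i _ => Finset.sum_congr rfl fun j _ =>
      Finset.sum_congr rfl fun l _ => by rw [hP, hdP]; ring
  have hdπ : ∑ l, Pb x l s * ∑ i, ∑ j, α x i * β x j * pd l (fun y => Pb y j i) x
      = ∑ i, ∑ j, ∑ l, α x i * β x j * -(Pb x l s * pd l (fun y => Pb y i j) x) := by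
    simp only [Finset.mul_sum]
    rw [Finset.sum_comm_cycle, Finset.sum_comm_cycle]
    exact Finset.sum_congr rfl fun i _ => Finset.sum_congr rfl fun j _ =>
      Finset.sum_congr rfl fun l _ => by rw [hdP]; ring
  have hjac : ∑ i, ∑ j, α x i * β x j * ((1/2 : ℝ) * schouten Pb x i j s)
      = ∑ i, ∑ j, ∑ l, α x i * β x j * -(Pb x l i * pd l (fun y => Pb y j s) x)
        - ∑ i, ∑ j, ∑ l, α x i * β x j * (Pb x l j * pd l (fun y => Pb y s i) x)
        + ∑ i, ∑ j, ∑ l, α x i * β x j * -(Pb x l s * pd l (fun y => Pb y i j) x) := by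
    simp only [schouten, jacobiator, Finset.mul_sum, ← Finset.sum_neg_distrib,
      ← Finset.sum_sub_distrib, ← Finset.sum_add_distrib]
    exact Finset.sum_congr rfl fun i _ => Finset.sum_congr rfl fun j _ =>
      Finset.sum_congr rfl fun l _ => by ring
  simp only [lieVF, pd_sharp hPb hα, pd_sharp hPb hβ]
  simp only [sharp, koszul_apply hPb hP hα hβ, mul_add, mul_sub, Finset.sum_add_distrib,
    Finset.sum_sub_distrib]
  linear_combination sum_sharp_mul_sharp_comm (Pb x) (α x) (fun p j => pd p (fun y => β y j) x) s
    - sum_sharp_mul_sharp_comm (Pb x) (β x) (fun p i => pd p (fun y => α y i) x) s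
    + hdα - hdβ + hdπ - hjac

end Bivector

section Intertwining

variable {U : Set (Vec n)} {Pb : Vec n → Fin n → Fin n → ℝ} {α β : Vec n → Vec n} {x : Vec n}

lemma smooth1F_const (U : Set (Vec n)) (v : Vec n) : Smooth1F U (fun _ => v) :=
  fun _ => contDiffOn_const

lemma nbarVF_sharp_sub_sharp_nbar1F_eq_schouten (hU : IsOpen U) (hPb : IsBivectorOn U Pb)
    (Γ : Vec n → Fin n → Fin n → Fin n → ℝ) (hα : Smooth1F U α) (hβ : Smooth1F U β)
    (hx : x ∈ U) :
    nbarVF Pb Γ α (fun y => sharp Pb y (β y)) x - sharp Pb x (nbar1F Pb Γ α β x)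
      = fun s => ∑ i, ∑ j, α x i * β x j * ((1/2 : ℝ) * schouten Pb x i j s) := by
  have hdiff {f : Vec n → ℝ} (hf : ContDiffOn ℝ (⊤ : ℕ∞) f U) : DifferentiableAt ℝ f x :=
    (hf.contDiffAt (hU.mem_nhds hx)).differentiableAt (by simp)
  rw [nbarVF_sharp_sub_sharp_nbar1F]
  funext s
  exact lieVF_sharp_sub_sharp_koszul (fun p q => hdiff (hPb.1 p q))
    (Filter.eventually_of_mem (hU.mem_nhds hx) hPb.2) (fun p => hdiff (hα p))
    (fun p => hdiff (hβ p)) s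

lemma nbarVF_sharp_eq_sharp_nbar1F (hU : IsOpen U) (hPb : IsBivectorOn U Pb)
    (Γ : Vec n → Fin n → Fin n → Fin n → ℝ) (hα : Smooth1F U α) (hβ : Smooth1F U β)
    (hx : x ∈ U) (hπ : ∀ i j k, schouten Pb x i j k = 0) :
    nbarVF Pb Γ α (fun y => sharp Pb y (β y)) x = sharp Pb x (nbar1F Pb Γ α β x) := by
  rw [← sub_eq_zero, nbarVF_sharp_sub_sharp_nbar1F_eq_schouten hU hPb Γ hα hβ hx]
  funext s
  simp [hπ]

lemma schouten_eq_zero_of_nbarVF_sharp_eq_sharp_nbar1F (hU : IsOpen U)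
    (hPb : IsBivectorOn U Pb) (Γ : Vec n → Fin n → Fin n → Fin n → ℝ) (hx : x ∈ U)
    (h : ∀ α β : Vec n → Vec n, Smooth1F U α → Smooth1F U β →
      nbarVF Pb Γ α (fun y => sharp Pb y (β y)) x = sharp Pb x (nbar1F Pb Γ α β x))
    (i j k : Fin n) : schouten Pb x i j k = 0 := by
  have hα := smooth1F_const U (Pi.single i 1)
  have hβ := smooth1F_const U (Pi.single j 1)
  have hk := congrFun (nbarVF_sharp_sub_sharp_nbar1F_eq_schouten hU hPb Γ hα hβ hx) k
  rw [h _ _ hα hβ, sub_self] at hk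
  simpa [Pi.single_apply, eq_comm] using hk

end Intertwining

theorem nbar_intertwining_defect_is_schouten_general
    {n : ℕ} (U : Set (Vec n)) (hU : IsOpen U)
    (Pb : Vec n → Fin n → Fin n → ℝ) (hPb : IsBivectorOn U Pb)
    (Γ : Vec n → Fin n → Fin n → Fin n → ℝ) :
    (∀ α β : Vec n → Vec n, Smooth1F U α → Smooth1F U β → ∀ x ∈ U,
      nbarVF Pb Γ α (fun y => sharp Pb y (β y)) x
          - sharp Pb x (nbar1F Pb Γ α β x)
        = fun s => ∑ i, ∑ j, α x i * β x j * ((1/2 : ℝ) * schouten Pb x i j s)) ∧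
    ((∀ α β : Vec n → Vec n, Smooth1F U α → Smooth1F U β → ∀ x ∈ U,
        nbarVF Pb Γ α (fun y => sharp Pb y (β y)) x
          = sharp Pb x (nbar1F Pb Γ α β x))
      ↔ (∀ x ∈ U, ∀ i j k, schouten Pb x i j k = 0)) ∧
    (IsPoissonOn U Pb →
      ∀ α β : Vec n → Vec n, Smooth1F U α → Smooth1F U β → ∀ x ∈ U,
        nbarVF Pb Γ α (fun y => sharp Pb y (β y)) x
          = sharp Pb x (nbar1F Pb Γ α β x)) := by
  refine ⟨fun α β hα hβ x hx => nbarVF_sharp_sub_sharp_nbar1F_eq_schouten hU hPb Γ hα hβ hx,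
    ⟨fun h x hx => schouten_eq_zero_of_nbarVF_sharp_eq_sharp_nbar1F hU hPb Γ hx
        fun α β hα hβ => h α β hα hβ x hx,
      fun h α β hα hβ x hx => nbarVF_sharp_eq_sharp_nbar1F hU hPb Γ hα hβ hx (h x hx)⟩,
    fun hπ α β hα hβ x hx => nbarVF_sharp_eq_sharp_nbar1F hU hPb Γ hα hβ hx
      fun i j k => by simp [schouten, hπ.2 x hx i j k]⟩

/-- For an arbitrary bivector field `π` (not necessarily Poisson) and any
classical connection `∇` on `TM`, the induced operators `∇̄` on `TM` and
`T*M` satisfy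
`∇̄_α(π♯(β)) − π♯(∇̄_α(β)) = (1/2) i_{α∧β}([π, π])`
(the trivector `[π,π]` contracted with `α ∧ β`, viewed as a vector field).
In particular the two operators intertwine via `π♯` for all `α, β` iff the
correction term vanishes, which holds when `π` is Poisson. -/
theorem nbar_intertwining_defect_is_schouten
    {n : ℕ} (U : Set (Vec n)) (hU : IsOpen U)
    (Pb : Vec n → Fin n → Fin n → ℝ) (hPb : IsBivectorOn U Pb)
    (Γ : Vec n → Fin n → Fin n → Fin n → ℝ)
    (hΓ : ∀ p q r, ContDiffOn ℝ (⊤ : ℕ∞) (fun x => Γ x p q r) U) :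
    (∀ α β : Vec n → Vec n, Smooth1F U α → Smooth1F U β → ∀ x ∈ U,
      nbarVF Pb Γ α (fun y => sharp Pb y (β y)) x
          - sharp Pb x (nbar1F Pb Γ α β x)
        = fun s => ∑ i, ∑ j, α x i * β x j * ((1/2 : ℝ) * schouten Pb x i j s)) ∧
    ((∀ α β : Vec n → Vec n, Smooth1F U α → Smooth1F U β → ∀ x ∈ U,
        nbarVF Pb Γ α (fun y => sharp Pb y (β y)) x
          = sharp Pb x (nbar1F Pb Γ α β x))
      ↔ (∀ x ∈ U, ∀ i j k, schouten Pb x i j k = 0)) ∧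
    (IsPoissonOn U Pb →
      ∀ α β : Vec n → Vec n, Smooth1F U α → Smooth1F U β → ∀ x ∈ U,
        nbarVF Pb Γ α (fun y => sharp Pb y (β y)) x
          = sharp Pb x (nbar1F Pb Γ α β x)) :=
  nbar_intertwining_defect_is_schouten_general U hU Pb hPb Γ

end PoissonPaper
end
end
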